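/- Let X_n = Σ_{i=0}^∞ a_i ε_{n−i} be a linear process with Σ_{i=0}^∞ |a_i|^γ < ∞ for some γ ∈ (0,1], and suppose E|e^{iλε₁} − φ_ε(λ)|² ≤ c₀(|λ|^{2γ} ∧ 1) for all λ ∈ ℝ and some constant c₀ > 0. Then there exists a constant c > 0 such that for all u, v ∈ ℝ: |H_{11}(u,v)| ≤ c |uv|^γ |φ_ε(u a₀) φ_ε(v a₀)| + c (|uv|^γ ∧ 1) ∏_{ℓ=1}^∞ |φ_ε((u+v) a_ℓ)|. -/

import Mathlib

open MeasureTheory ProbabilityTheory Complex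

/-- The characteristic function of a real random variable `Y` on `(Ω, μ)`:
`t ↦ E[exp(I t Y)]`. -/
noncomputable def charFn {Ω : Type*} [MeasurableSpace Ω] (μ : Measure Ω) (Y : Ω → ℝ) (t : ℝ) : ℂ :=
  ∫ ω, Complex.exp (Complex.I * (t * Y ω : ℝ)) ∂μ

/-- `H_{ij}(u,v) = E[e^{iuX_i + ivX_j}] − φ(u)φ(v)` where `φ` is the characteristic function
of `X_1`. -/
noncomputable def Hfun {Ω : Type*} [MeasurableSpace Ω] (μ : Measure Ω) (X : ℤ → Ω → ℝ)
    (i j : ℕ) (u v : ℝ) : ℂ :=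
  (∫ ω, Complex.exp (Complex.I * (u * X i ω + v * X j ω : ℝ)) ∂μ)
    - charFn μ (X 1) u * charFn μ (X 1) v

/-!
Since the partial sums of the series defining `X₁` are sums of independent terms,
`φ_X(t) = lim_m ∏_{k<m} φ_ε(t aₖ) = φ_ε(t a₀) ψ(t)`, where `ψ` is the characteristic function of
the tail `X₁ - a₀ε₁` and is itself the limit of the products over `k ≥ 1`. Hence
`H₁₁(u,v) = φ_X(u+v) - φ_X(u)φ_X(v)
  = [φ_ε((u+v)a₀) - φ_ε(ua₀)φ_ε(va₀)] ψ(u+v) + φ_ε(ua₀)φ_ε(va₀) [ψ(u+v) - ψ(u)ψ(v)]`.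
The key estimate is that `φ_ε(α+β) - φ_ε(α)φ_ε(β)` is the covariance of the centred exponentials
`e^{iαε} - φ_ε(α)` and `e^{iβε} - φ_ε(β)`, so by Cauchy–Schwarz it is at most
`c₀ (|α|^γ ∧ 1)(|β|^γ ∧ 1)`. This bounds the first bracket by a multiple of `|uv|^γ ∧ 1`, while
`|ψ(u+v)| ≤ ∏_{ℓ≥1} |φ_ε((u+v)a_ℓ)|`; telescoping the products (all factors have modulus `≤ 1`)
bounds the second bracket by `c₀ Σ_{ℓ≥1} |a_ℓ|^{2γ} |uv|^γ`.
-/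

open Filter Finset Topology

lemma sqrt_mul_min_rpow_two_mul (c x γ : ℝ) :
    √(c * min (|x| ^ (2 * γ)) 1) = √c * min (|x| ^ γ) 1 := by
  have hx : 0 ≤ |x| ^ γ := by positivity
  have hmin : min ((|x| ^ γ) ^ 2) 1 = (min (|x| ^ γ) 1) ^ 2 := by
    rcases le_total (|x| ^ γ) 1 with h | h
    · rw [min_eq_left h, min_eq_left (pow_le_one₀ hx h)]
    · rw [min_eq_right h, min_eq_right (one_le_pow₀ h), one_pow]
  rw [mul_comm 2 γ, Real.rpow_mul (abs_nonneg x), Real.rpow_two, hmin,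
    Real.sqrt_mul' _ (sq_nonneg _), Real.sqrt_sq (le_min hx zero_le_one)]

lemma min_rpow_mul_min_rpow_le (x y b γ : ℝ) :
    min (|x * b| ^ γ) 1 * min (|y * b| ^ γ) 1 ≤ (|b| ^ γ) ^ 2 * |x * y| ^ γ := by
  have hxy : |x * b| ^ γ * |y * b| ^ γ = (|b| ^ γ) ^ 2 * |x * y| ^ γ := by
    simp only [abs_mul, Real.mul_rpow (abs_nonneg _) (abs_nonneg _)]
    ring
  rw [← hxy]
  gcongr <;> first | positivity | exact min_le_left _ _

lemma min_rpow_mul_min_rpow_le_max_mul_min (x y b γ : ℝ) :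
    min (|x * b| ^ γ) 1 * min (|y * b| ^ γ) 1 ≤ max ((|b| ^ γ) ^ 2) 1 * min (|x * y| ^ γ) 1 := by
  rcases le_total (|x * y| ^ γ) 1 with h | h
  · rw [min_eq_left h]
    exact (min_rpow_mul_min_rpow_le x y b γ).trans (by gcongr; exact le_max_left _ _)
  · rw [min_eq_right h, mul_one]
    exact (mul_le_one₀ (min_le_right _ _) (by positivity) (min_le_right _ _)).trans
      (le_max_right _ _)

lemma Summable.sq {ι : Type*} {f : ι → ℝ} (hf : Summable f) : Summable fun i => f i ^ 2 := by
  refine Summable.of_norm_bounded_eventually hf.abs ?_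
  filter_upwards [hf.tendsto_cofinite_zero.eventually (Metric.closedBall_mem_nhds 0 zero_lt_one)]
    with i hi
  rw [dist_zero_right, Real.norm_eq_abs] at hi
  rw [norm_pow, Real.norm_eq_abs]
  exact pow_le_of_le_one (abs_nonneg _) hi two_ne_zero

lemma norm_mul_sub_mul_mul_le {R : Type*} [SeminormedCommRing R] (p₀ p₁ p₂ q₀ q₁ q₂ : R) :
    ‖p₀ * q₀ - p₁ * q₁ * (p₂ * q₂)‖
      ≤ ‖p₀ - p₁ * p₂‖ * ‖q₀‖ + ‖p₁ * p₂‖ * ‖q₀ - q₁ * q₂‖ := by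
  rw [show p₀ * q₀ - p₁ * q₁ * (p₂ * q₂) = (p₀ - p₁ * p₂) * q₀ + p₁ * p₂ * (q₀ - q₁ * q₂) by
    ring]
  exact (norm_add_le _ _).trans (add_le_add (norm_mul_le _ _) (norm_mul_le _ _))

section Products

variable {R : Type*} [NormedCommRing R] [NormOneClass R]

lemma norm_prod_sub_prod_le_sum {ι : Type*} (s : Finset ι) {f g : ι → R}
    (hf : ∀ i ∈ s, ‖f i‖ ≤ 1) (hg : ∀ i ∈ s, ‖g i‖ ≤ 1) :
    ‖∏ i ∈ s, f i - ∏ i ∈ s, g i‖ ≤ ∑ i ∈ s, ‖f i - g i‖ := by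
  classical
  induction s using Finset.induction_on with
  | empty => simp
  | insert i s hi ih =>
    simp only [mem_insert, forall_eq_or_imp] at hf hg
    have hgs : ‖∏ j ∈ s, g j‖ ≤ 1 :=
      (Finset.norm_prod_le _ _).trans (prod_le_one (fun _ _ => norm_nonneg _) hg.2)
    rw [prod_insert hi, prod_insert hi, sum_insert hi,
      show f i * ∏ j ∈ s, f j - g i * ∏ j ∈ s, g j
        = f i * (∏ j ∈ s, f j - ∏ j ∈ s, g j) + (f i - g i) * ∏ j ∈ s, g j by ring]
    calc _ ≤ ‖f i‖ * ‖∏ j ∈ s, f j - ∏ j ∈ s, g j‖ + ‖f i - g i‖ * ‖∏ j ∈ s, g j‖ :=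
          (norm_add_le _ _).trans (add_le_add (norm_mul_le _ _) (norm_mul_le _ _))
      _ ≤ 1 * ∑ j ∈ s, ‖f j - g j‖ + ‖f i - g i‖ * 1 := by
          gcongr
          exacts [hf.1, ih hf.2 hg.2]
      _ = _ := by ring

lemma norm_le_tprod_norm_of_tendsto_prod {f : ℕ → R} (hf : ∀ k, ‖f k‖ ≤ 1) {x : R}
    (hx : Tendsto (fun m => ∏ k ∈ range m, f k) atTop (𝓝 x)) : ‖x‖ ≤ ∏' k, ‖f k‖ := by
  by_cases hmul : Multipliable fun k => ‖f k‖
  · exact le_of_tendsto_of_tendsto' hx.norm hmul.hasProd.tendsto_prod_nat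
      fun m => Finset.norm_prod_le _ _
  · rw [tprod_eq_one_of_not_multipliable hmul]
    exact le_of_tendsto' hx.norm fun m =>
      (Finset.norm_prod_le _ _).trans (prod_le_one (fun _ _ => norm_nonneg _) fun k _ => hf k)

lemma norm_sub_mul_le_tsum_of_tendsto_prod {f g h : ℕ → R} (hf : ∀ k, ‖f k‖ ≤ 1)
    (hg : ∀ k, ‖g k‖ ≤ 1) (hh : ∀ k, ‖h k‖ ≤ 1) {d : ℕ → ℝ} (hd : Summable d)
    (hfgh : ∀ k, ‖f k - g k * h k‖ ≤ d k) {x y z : R}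
    (hx : Tendsto (fun m => ∏ k ∈ range m, f k) atTop (𝓝 x))
    (hy : Tendsto (fun m => ∏ k ∈ range m, g k) atTop (𝓝 y))
    (hz : Tendsto (fun m => ∏ k ∈ range m, h k) atTop (𝓝 z)) :
    ‖x - y * z‖ ≤ ∑' k, d k := by
  refine le_of_tendsto' (hx.sub (hy.mul hz)).norm fun m => ?_
  have hgh : ∀ k ∈ range m, ‖g k * h k‖ ≤ 1 := fun k _ =>
    (norm_mul_le _ _).trans (mul_le_one₀ (hg k) (norm_nonneg _) (hh k))
  rw [← prod_mul_distrib]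
  calc _ ≤ ∑ k ∈ range m, ‖f k - g k * h k‖ :=
        norm_prod_sub_prod_le_sum _ (fun k _ => hf k) hgh
    _ ≤ ∑ k ∈ range m, d k := sum_le_sum fun k _ => hfgh k
    _ ≤ ∑' k, d k := hd.sum_le_tsum _ fun k _ => (norm_nonneg _).trans (hfgh k)

end Products

section CharFn

variable {Ω : Type*} [MeasurableSpace Ω] {μ : Measure Ω}

lemma norm_cexp_I_mul_ofReal (x : ℝ) : ‖cexp (I * x)‖ = 1 := by
  rw [mul_comm, norm_exp_ofReal_mul_I]

lemma charFn_eq_charFun_map {Y : Ω → ℝ} (hY : AEMeasurable Y μ) (t : ℝ) :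
    charFn μ Y t = charFun (μ.map Y) t := by
  rw [charFun_apply_real, integral_map hY (by fun_prop)]
  simp only [charFn, ofReal_mul, mul_comm I]

lemma norm_charFn_le_one [IsProbabilityMeasure μ] {Y : Ω → ℝ} (hY : AEMeasurable Y μ) (t : ℝ) :
    ‖charFn μ Y t‖ ≤ 1 := by
  have := Measure.isProbabilityMeasure_map (μ := μ) hY
  rw [charFn_eq_charFun_map hY]
  exact norm_charFun_le_one t

lemma ProbabilityTheory.IdentDistrib.charFn_eq {Y Z : Ω → ℝ} (h : IdentDistrib Y Z μ μ) :
    charFn μ Y = charFn μ Z := by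
  ext t
  rw [charFn_eq_charFun_map h.aemeasurable_fst, charFn_eq_charFun_map h.aemeasurable_snd, h.map_eq]

lemma charFn_const_mul (Y : Ω → ℝ) (b t : ℝ) :
    charFn μ (fun ω => b * Y ω) t = charFn μ Y (t * b) := by
  simp only [charFn, mul_assoc]

lemma charFn_finsetSum_eq_prod [IsProbabilityMeasure μ] {ι : Type*} {Z : ι → Ω → ℝ}
    (hZ : ∀ i, Measurable (Z i)) (hindep : iIndepFun Z μ) (s : Finset ι) (t : ℝ) :
    charFn μ (fun ω => ∑ i ∈ s, Z i ω) t = ∏ i ∈ s, charFn μ (Z i) t := by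
  rw [charFn_eq_charFun_map (s.measurable_fun_sum fun i _ => hZ i).aemeasurable,
    (hindep.restrict s).charFun_map_fun_finsetSum_eq_prod fun i _ => (hZ i).aemeasurable,
    Finset.prod_apply]
  exact prod_congr rfl fun i _ => (charFn_eq_charFun_map (hZ i).aemeasurable t).symm

lemma tendsto_charFn_of_ae_tendsto [IsFiniteMeasure μ] {S : ℕ → Ω → ℝ} {Y : Ω → ℝ}
    (hS : ∀ m, Measurable (S m)) (h : ∀ᵐ ω ∂μ, Tendsto (fun m => S m ω) atTop (𝓝 (Y ω)))
    (t : ℝ) : Tendsto (fun m => charFn μ (S m) t) atTop (𝓝 (charFn μ Y t)) := by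
  refine tendsto_integral_of_dominated_convergence (fun _ => 1) (fun m => ?_)
    (integrable_const 1) (fun m => ae_of_all _ fun ω => ?_) ?_
  · exact Measurable.aestronglyMeasurable (by fun_prop)
  · exact (norm_cexp_I_mul_ofReal _).le
  · filter_upwards [h] with ω hω
    exact ((by fun_prop : Continuous fun x : ℝ => cexp (I * (t * x : ℝ))).tendsto _).comp hω

lemma Hfun_self (X : ℤ → Ω → ℝ) (i : ℕ) (u v : ℝ) :
    Hfun μ X i i u v = charFn μ (X i) (u + v) - charFn μ (X 1) u * charFn μ (X 1) v := by
  simp only [Hfun, charFn, add_mul]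

end CharFn

section Covariance

variable {Ω : Type*} [MeasurableSpace Ω] {μ : Measure Ω} [IsProbabilityMeasure μ]

lemma norm_charFn_add_sub_mul_le_sqrt {Z : Ω → ℝ} (hZ : Measurable Z) (α β : ℝ) :
    ‖charFn μ Z (α + β) - charFn μ Z α * charFn μ Z β‖
      ≤ √(∫ ω, ‖cexp (I * (α * Z ω : ℝ)) - charFn μ Z α‖ ^ 2 ∂μ)
        * √(∫ ω, ‖cexp (I * (β * Z ω : ℝ)) - charFn μ Z β‖ ^ 2 ∂μ) := by
  set e : ℝ → Ω → ℂ := fun t ω => cexp (I * (t * Z ω : ℝ))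
  have he : ∀ t, Integrable (e t) μ := fun t =>
    (integrable_const (1 : ℝ)).mono' (Measurable.aestronglyMeasurable (by fun_prop))
      (ae_of_all _ fun ω => (norm_cexp_I_mul_ofReal _).le)
  have hcentered : ∀ t, MemLp (fun ω => e t ω - charFn μ Z t) (ENNReal.ofReal 2) μ := fun t =>
    MemLp.of_bound ((he t).1.sub aestronglyMeasurable_const) 2 (ae_of_all _ fun ω =>
      (norm_sub_le _ _).trans (by
        rw [norm_cexp_I_mul_ofReal]
        linarith [norm_charFn_le_one (μ := μ) hZ.aemeasurable t]))
  have hcov : ∫ ω, (e α ω - charFn μ Z α) * (e β ω - charFn μ Z β) ∂μ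
      = charFn μ Z (α + β) - charFn μ Z α * charFn μ Z β := by
    have hexpand : ∀ ω, (e α ω - charFn μ Z α) * (e β ω - charFn μ Z β)
        = e (α + β) ω - charFn μ Z α * e β ω - charFn μ Z β * e α ω
          + charFn μ Z α * charFn μ Z β := fun ω => by
      simp only [e, ofReal_mul, ofReal_add, add_mul, mul_add, Complex.exp_add]
      ring
    have h1 : Integrable (fun ω => e (α + β) ω - charFn μ Z α * e β ω) μ :=
      (he _).sub ((he _).const_mul _)
    have h2 : Integrable (fun ω => e (α + β) ω - charFn μ Z α * e β ω
        - charFn μ Z β * e α ω) μ := h1.sub ((he _).const_mul _)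
    simp only [hexpand]
    rw [integral_add h2 (integrable_const _), integral_sub h1 ((he _).const_mul _),
      integral_sub (he _) ((he _).const_mul _), integral_const_mul, integral_const_mul,
      integral_const]
    simp only [e, charFn, probReal_univ, one_smul]
    ring
  have hsq : ∀ t, (∫ ω, ‖e t ω - charFn μ Z t‖ ^ (2 : ℝ) ∂μ) ^ (1 / (2 : ℝ))
      = √(∫ ω, ‖e t ω - charFn μ Z t‖ ^ 2 ∂μ) := fun t => by
    simp only [Real.sqrt_eq_rpow, Real.rpow_two]
  rw [← hcov, ← hsq, ← hsq]
  refine (norm_integral_le_integral_norm _).trans (le_of_eq_of_le ?_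
    (integral_mul_norm_le_Lp_mul_Lq Real.HolderConjugate.two_two (hcentered α) (hcentered β)))
  simp only [norm_mul]

lemma norm_charFn_add_sub_mul_le {Z : Ω → ℝ} (hZ : Measurable Z) {c₀ γ : ℝ} (hc₀ : 0 ≤ c₀)
    (hcha : ∀ lam : ℝ,
      ∫ ω, ‖cexp (I * (lam * Z ω : ℝ)) - charFn μ Z lam‖ ^ 2 ∂μ ≤ c₀ * min (|lam| ^ (2 * γ)) 1)
    (α β : ℝ) :
    ‖charFn μ Z (α + β) - charFn μ Z α * charFn μ Z β‖
      ≤ c₀ * (min (|α| ^ γ) 1 * min (|β| ^ γ) 1) := by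
  calc _ ≤ √(c₀ * min (|α| ^ (2 * γ)) 1) * √(c₀ * min (|β| ^ (2 * γ)) 1) :=
        (norm_charFn_add_sub_mul_le_sqrt hZ α β).trans
          (mul_le_mul (Real.sqrt_le_sqrt (hcha α)) (Real.sqrt_le_sqrt (hcha β))
            (Real.sqrt_nonneg _) (Real.sqrt_nonneg _))
    _ = √c₀ * √c₀ * (min (|α| ^ γ) 1 * min (|β| ^ γ) 1) := by
        rw [sqrt_mul_min_rpow_two_mul, sqrt_mul_min_rpow_two_mul]
        ring
    _ = _ := by rw [Real.mul_self_sqrt hc₀]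

end Covariance

lemma norm_sub_mul_le_of_tendsto_prod {φ ψ : ℝ → ℂ} (hφ : ∀ t, ‖φ t‖ ≤ 1) {c₀ γ : ℝ}
    (hc₀ : 0 ≤ c₀)
    (hcov : ∀ α β, ‖φ (α + β) - φ α * φ β‖ ≤ c₀ * (min (|α| ^ γ) 1 * min (|β| ^ γ) 1))
    {b : ℕ → ℝ} (hb : Summable fun k => (|b k| ^ γ) ^ 2)
    (hψ : ∀ t, Tendsto (fun m => ∏ k ∈ range m, φ (t * b k)) atTop (𝓝 (ψ t))) (u v : ℝ) :
    ‖ψ (u + v) - ψ u * ψ v‖ ≤ c₀ * (∑' k, (|b k| ^ γ) ^ 2) * |u * v| ^ γ := by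
  have hterm : ∀ k, ‖φ ((u + v) * b k) - φ (u * b k) * φ (v * b k)‖
      ≤ c₀ * (|b k| ^ γ) ^ 2 * |u * v| ^ γ := fun k => by
    rw [add_mul, mul_assoc]
    exact (hcov _ _).trans (mul_le_mul_of_nonneg_left (min_rpow_mul_min_rpow_le _ _ _ _) hc₀)
  have htsum : ∑' k, c₀ * (|b k| ^ γ) ^ 2 * |u * v| ^ γ
      = c₀ * (∑' k, (|b k| ^ γ) ^ 2) * |u * v| ^ γ := by
    rw [tsum_mul_right, tsum_mul_left]
  rw [← htsum]
  exact norm_sub_mul_le_tsum_of_tendsto_prod (fun k => hφ _) (fun k => hφ _) (fun k => hφ _)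
    ((hb.mul_left c₀).mul_right _) hterm (hψ _) (hψ u) (hψ v)

section LinearProcess

variable {Ω : Type*} [MeasurableSpace Ω] {μ : Measure Ω} [IsProbabilityMeasure μ]

lemma tendsto_prod_charFn_of_hasSum {ι : Type*} {ε : ι → Ω → ℝ} {ξ : Ω → ℝ}
    (hmeas : ∀ i, Measurable (ε i)) (hindep : iIndepFun ε μ)
    (hident : ∀ i, IdentDistrib (ε i) ξ μ μ) {J : ℕ → ι} (hJ : J.Injective) {b : ℕ → ℝ}
    {Y : Ω → ℝ} (hY : ∀ᵐ ω ∂μ, HasSum (fun k => b k * ε (J k) ω) (Y ω)) (t : ℝ) :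
    Tendsto (fun m => ∏ k ∈ range m, charFn μ ξ (t * b k)) atTop (𝓝 (charFn μ Y t)) := by
  have hterms : iIndepFun (fun k ω => b k * ε (J k) ω) μ :=
    (hindep.precomp hJ).comp (fun k x => b k * x) fun k => measurable_const_mul _
  have hpartial : ∀ m, ∏ k ∈ range m, charFn μ ξ (t * b k)
      = charFn μ (fun ω => ∑ k ∈ range m, b k * ε (J k) ω) t := by
    intro m
    rw [charFn_finsetSum_eq_prod (fun k => (hmeas (J k)).const_mul _) hterms]
    exact prod_congr rfl fun k _ => by rw [charFn_const_mul, (hident (J k)).charFn_eq]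
  simp only [hpartial]
  exact tendsto_charFn_of_ae_tendsto (fun m => by fun_prop)
    (hY.mono fun ω hω => hω.tendsto_sum_nat) t

variable {ε : ℤ → Ω → ℝ} {ξ : Ω → ℝ} {a : ℕ → ℝ} {X : ℤ → Ω → ℝ}

lemma tendsto_prod_charFn_linear_tail (hmeas : ∀ i, Measurable (ε i)) (hindep : iIndepFun ε μ)
    (hident : ∀ i, IdentDistrib (ε i) ξ μ μ) {n : ℤ}
    (hX : ∀ᵐ ω ∂μ, HasSum (fun i : ℕ => a i * ε (n - i) ω) (X n ω)) (t : ℝ) :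
    Tendsto (fun m => ∏ k ∈ range m, charFn μ ξ (t * a (k + 1))) atTop
      (𝓝 (charFn μ (fun ω => X n ω - a 0 * ε n ω) t)) := by
  refine tendsto_prod_charFn_of_hasSum hmeas hindep hident (J := fun k : ℕ => n - (k + 1))
    (fun k l h => by simpa using h) (hX.mono fun ω hω => ?_) t
  simpa [sum_range_one] using (hasSum_nat_add_iff' 1).mpr hω

lemma charFn_linear_eq_mul_tail (hmeas : ∀ i, Measurable (ε i)) (hindep : iIndepFun ε μ)
    (hident : ∀ i, IdentDistrib (ε i) ξ μ μ) {n : ℤ}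
    (hX : ∀ᵐ ω ∂μ, HasSum (fun i : ℕ => a i * ε (n - i) ω) (X n ω)) (t : ℝ) :
    charFn μ (X n) t = charFn μ ξ (t * a 0) * charFn μ (fun ω => X n ω - a 0 * ε n ω) t := by
  have hfull := tendsto_prod_charFn_of_hasSum hmeas hindep hident (J := fun k : ℕ => n - k)
    (fun k l h => by simpa using h) hX t
  refine tendsto_nhds_unique ((tendsto_add_atTop_iff_nat 1).mpr hfull) ?_
  simp only [prod_range_succ']
  rw [mul_comm (charFn μ ξ (t * a 0))]
  exact (tendsto_prod_charFn_linear_tail hmeas hindep hident hX t).mul_const _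

end LinearProcess

theorem stmt4_general {Ω : Type*} [MeasurableSpace Ω] (μ : Measure Ω) [IsProbabilityMeasure μ]
    (ε : ℤ → Ω → ℝ) (hmeas : ∀ i, Measurable (ε i))
    (hindep : iIndepFun ε μ)
    (hident : ∀ i, IdentDistrib (ε i) (ε 1) μ μ)
    (a : ℕ → ℝ)
    (X : ℤ → Ω → ℝ)
    (hX : ∀ n : ℤ, ∀ᵐ ω ∂μ, HasSum (fun i : ℕ => a i * ε (n - i) ω) (X n ω))
    (γ : ℝ)
    (hsum : Summable (fun i => |a i| ^ γ))
    (c₀ : ℝ) (hc₀ : 0 < c₀)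
    (hcha : ∀ lam : ℝ,
      (∫ ω, ‖Complex.exp (Complex.I * (lam * ε 1 ω : ℝ)) - charFn μ (ε 1) lam‖ ^ 2 ∂μ)
        ≤ c₀ * min (|lam| ^ (2 * γ)) 1) :
    ∃ c > (0:ℝ), ∀ u v : ℝ,
      ‖Hfun μ X 1 1 u v‖
        ≤ c * |u * v| ^ γ * ‖charFn μ (ε 1) (u * a 0) * charFn μ (ε 1) (v * a 0)‖
          + c * min (|u * v| ^ γ) 1 * ∏' ℓ : ℕ, ‖charFn μ (ε 1) ((u + v) * a (ℓ + 1))‖ := by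
  set φ := charFn μ (ε 1)
  set ψ := charFn μ (fun ω => X 1 ω - a 0 * ε 1 ω)
  have hφ : ∀ t, ‖φ t‖ ≤ 1 := norm_charFn_le_one (hmeas 1).aemeasurable
  have hcov := norm_charFn_add_sub_mul_le (hmeas 1) hc₀.le hcha
  have htail := tendsto_prod_charFn_linear_tail hmeas hindep hident (hX 1)
  set M := max ((|a 0| ^ γ) ^ 2) 1
  set S := ∑' k, (|a (k + 1)| ^ γ) ^ 2
  have hS : 0 ≤ c₀ * S := mul_nonneg hc₀.le (tsum_nonneg fun k => sq_nonneg _)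
  refine ⟨c₀ * M + c₀ * S, by positivity, fun u v => ?_⟩
  have hhead : ‖φ ((u + v) * a 0) - φ (u * a 0) * φ (v * a 0)‖
      ≤ c₀ * M * min (|u * v| ^ γ) 1 := by
    rw [add_mul, mul_assoc]
    exact (hcov _ _).trans
      (mul_le_mul_of_nonneg_left (min_rpow_mul_min_rpow_le_max_mul_min _ _ _ _) hc₀.le)
  have htail_cov : ‖ψ (u + v) - ψ u * ψ v‖ ≤ c₀ * S * |u * v| ^ γ :=
    norm_sub_mul_le_of_tendsto_prod hφ hc₀.le hcov ((summable_nat_add_iff 1).2 hsum).sq htail u v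
  have hψ : ‖ψ (u + v)‖ ≤ ∏' ℓ : ℕ, ‖φ ((u + v) * a (ℓ + 1))‖ :=
    norm_le_tprod_norm_of_tendsto_prod (fun k => hφ _) (htail (u + v))
  have hP : 0 ≤ ∏' ℓ : ℕ, ‖φ ((u + v) * a (ℓ + 1))‖ := tprod_nonneg fun ℓ => norm_nonneg _
  rw [Hfun_self, Nat.cast_one]
  simp only [charFn_linear_eq_mul_tail hmeas hindep hident (hX 1)]
  calc _ ≤ _ := norm_mul_sub_mul_mul_le _ _ _ _ _ _
    _ ≤ c₀ * S * |u * v| ^ γ * ‖φ (u * a 0) * φ (v * a 0)‖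
          + c₀ * M * min (|u * v| ^ γ) 1 * ∏' ℓ : ℕ, ‖φ ((u + v) * a (ℓ + 1))‖ := by
        rw [add_comm, mul_comm ‖_‖]
        gcongr
    _ ≤ _ := by gcongr <;> linarith [(by positivity : 0 ≤ c₀ * M)]

/-- for a linear process `X_n = Σ_{i=0}^∞ a_i ε_{n−i}` with `Σ |a_i|^γ < ∞` for
some `γ ∈ (0,1]`, if `E|e^{iλε₁} − φ_ε(λ)|² ≤ c₀(|λ|^{2γ} ∧ 1)` for all `λ` and some `c₀ > 0`,
then there is `c > 0` such that for all `u, v ∈ ℝ`: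
`|H₁₁(u,v)| ≤ c|uv|^γ |φ_ε(ua₀)φ_ε(va₀)| + c(|uv|^γ ∧ 1) ∏_{ℓ=1}^∞ |φ_ε((u+v)a_ℓ)|`. -/
theorem stmt4 {Ω : Type*} [MeasurableSpace Ω] (μ : Measure Ω) [IsProbabilityMeasure μ]
    (ε : ℤ → Ω → ℝ) (hmeas : ∀ i, Measurable (ε i))
    (hindep : iIndepFun ε μ)
    (hident : ∀ i, IdentDistrib (ε i) (ε 1) μ μ)
    (a : ℕ → ℝ) (ha0 : a 0 ≠ 0)
    (X : ℤ → Ω → ℝ)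
    (hX : ∀ n : ℤ, ∀ᵐ ω ∂μ, HasSum (fun i : ℕ => a i * ε (n - i) ω) (X n ω))
    (γ : ℝ) (hγ : γ ∈ Set.Ioc (0:ℝ) 1)
    (hsum : Summable (fun i => |a i| ^ γ))
    (c₀ : ℝ) (hc₀ : 0 < c₀)
    (hcha : ∀ lam : ℝ,
      (∫ ω, ‖Complex.exp (Complex.I * (lam * ε 1 ω : ℝ)) - charFn μ (ε 1) lam‖ ^ 2 ∂μ)
        ≤ c₀ * min (|lam| ^ (2 * γ)) 1) :
    ∃ c > (0:ℝ), ∀ u v : ℝ,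
      ‖Hfun μ X 1 1 u v‖
        ≤ c * |u * v| ^ γ * ‖charFn μ (ε 1) (u * a 0) * charFn μ (ε 1) (v * a 0)‖
          + c * min (|u * v| ^ γ) 1 * ∏' ℓ : ℕ, ‖charFn μ (ε 1) ((u + v) * a (ℓ + 1))‖ :=
  stmt4_general μ ε hmeas hindep hident a X hX γ hsum c₀ hc₀ hcha
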